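/- Let F be a field, q ∈ F, and s, t ≥ 1 natural numbers with q + 1 ≠ 0 and q²(s−1)(t−1) − 1 ≠ 0 in F. Let w be any vertex in the Y-part of K_{s,t}. Then ∑_{u} (1 + (q − 1)·D(u,w))·x(u) = 1, where the sum runs over all vertices u of K_{s,t}, D is the q-distance matrix of K_{s,t}, and x is the vector defined in the context. -/

import Mathlib

/-- The `q`-distance matrix of the complete bipartite graph `K_{s,t}`,
indexed by `Fin s ⊕ Fin t`: diagonal entries are `0`, entries between the two
parts are `1`, and off-diagonal entries within a part are `q + 1`. -/
def qDistKst (F : Type*) [Field F] (q : F) (s t : ℕ) :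
    Matrix (Fin s ⊕ Fin t) (Fin s ⊕ Fin t) F :=
  Matrix.of fun u v =>
    if u = v then 0 else if u.isLeft = v.isLeft then q + 1 else 1

/-- The special vector `x` of `K_{s,t}`. -/
def xVecKst (F : Type*) [Field F] (q : F) (s t : ℕ) :
    Fin s ⊕ Fin t → F :=
  Sum.elim
    (fun _ => (q * ((t : F) - 1) - 1) /
      ((q + 1) * (q ^ 2 * ((s : F) - 1) * ((t : F) - 1) - 1)))
    (fun _ => (q * ((s : F) - 1) - 1) /
      ((q + 1) * (q ^ 2 * ((s : F) - 1) * ((t : F) - 1) - 1)))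

/-!
Column `w` of `D` is `1` on `X`, `0` at `w` and `q + 1` on `Y \ {w}`, and `1 + (q - 1)(q + 1) = q²`,
so the sum is `s q x_X + (1 + (t - 1) q²) x_Y`. Over the common denominator
`(q + 1)(q²(s - 1)(t - 1) - 1)` the claim becomes a polynomial identity in `q`, `s`, `t`.
-/

section

variable {F : Type*} [Field F] {q : F} {s t : ℕ}

@[simp]
lemma qDistKst_inl_inr (a : Fin s) (b : Fin t) :
    qDistKst F q s t (.inl a) (.inr b) = 1 := by
  simp [qDistKst]

@[simp]
lemma qDistKst_inr_inr (b w : Fin t) :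
    qDistKst F q s t (.inr b) (.inr w) = if b = w then 0 else q + 1 := by
  simp [qDistKst]

lemma sum_qDistKst_inr_mul_sumElim (φ : F → F) (α β : F) (w : Fin t) :
    ∑ u, φ (qDistKst F q s t u (.inr w)) * Sum.elim (fun _ => α) (fun _ => β) u
      = s * φ 1 * α + (φ 0 + (t - 1) * φ (q + 1)) * β := by
  have hY : ∑ b : Fin t, φ (if b = w then 0 else q + 1) * β
      = (φ 0 + (t - 1) * φ (q + 1)) * β := by
    rw [Fintype.sum_eq_add_sum_compl w, if_pos rfl,
      Finset.sum_congr rfl fun b hb => by rw [if_neg (by simpa using hb)], Finset.sum_const,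
      Finset.card_compl, Finset.card_singleton, Fintype.card_fin, nsmul_eq_mul,
      Nat.cast_sub w.pos, Nat.cast_one]
    ring
  simp only [Fintype.sum_sum_type, Sum.elim_inl, Sum.elim_inr, qDistKst_inl_inr,
    qDistKst_inr_inr, hY, Finset.sum_const, Finset.card_univ, Fintype.card_fin, nsmul_eq_mul]
  ring

end

theorem sum_qdist_x_eq_one_general (F : Type*) [Field F] (q : F)
    (s t : ℕ) (hq : q + 1 ≠ 0)
    (hΔ : q ^ 2 * ((s : F) - 1) * ((t : F) - 1) - 1 ≠ 0) (w : Fin t) :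
    ∑ u, (1 + (q - 1) * qDistKst F q s t u (Sum.inr w)) * xVecKst F q s t u
      = 1 := by
  rw [xVecKst, sum_qDistKst_inr_mul_sumElim (fun d => 1 + (q - 1) * d),
    ← mul_div_assoc, ← mul_div_assoc, ← add_div, div_eq_one_iff_eq (mul_ne_zero hq hΔ)]
  ring

theorem sum_qdist_x_eq_one (F : Type*) [Field F] (q : F)
    (s t : ℕ) (hs : 1 ≤ s) (ht : 1 ≤ t) (hq : q + 1 ≠ 0)
    (hΔ : q ^ 2 * ((s : F) - 1) * ((t : F) - 1) - 1 ≠ 0) (w : Fin t) :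
    ∑ u, (1 + (q - 1) * qDistKst F q s t u (Sum.inr w)) * xVecKst F q s t u
      = 1 :=
  sum_qdist_x_eq_one_general F q s t hq hΔ w
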